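/- arXiv:1108.0216 — 2 statements merged into one kernel-verified Lean document; each statement's English description precedes it below -/
import Mathlib

section
/- Let m ≥ 1 and let F₁, G₁, …, F_m, G_m be lifts of orientation-preserving circle homeomorphisms. If the m-fold product of commutators [F₁,G₁] ∘ [F₂,G₂] ∘ ⋯ ∘ [F_m,G_m] equals the translation T_a for some real number a, then |a| < 2m − 1. -/
/-- A lift of an orientation-preserving circle homeomorphism: a strictly increasing
bijection `F : ℝ → ℝ` with `F (x + 1) = F x + 1` for all `x`. -/
def IsCircleLift (F : ℝ → ℝ) : Prop :=
  StrictMono F ∧ Function.Bijective F ∧ ∀ x : ℝ, F (x + 1) = F x + 1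

/-- The commutator `[F, G] = F ∘ G ∘ F⁻¹ ∘ G⁻¹` of two bijections of `ℝ`. -/
noncomputable def circleComm (F G : ℝ → ℝ) : ℝ → ℝ :=
  F ∘ G ∘ Function.invFun F ∘ Function.invFun G

/-!
The displacement `x ↦ F x - x` of a lift is `1`-periodic, and any two of its values differ by
less than `1`. Let `z` maximise the displacement of `F`. Since `[F, G] (G (F z)) = F (G z)`,
the displacement of `[F, G]` at `G (F z)` is
`(F (G z) - G z) - (F z - z) + (G z - z) - (G (F z) - F z) < 0 + 1`;
minimising instead gives a point where it exceeds `-1`. As `[F, G]` is itself a lift, its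
displacement therefore lies in `(-2, 2)` everywhere. Evaluating `T_a = [F₁, G₁] ∘ ⋯ ∘ [F_m, G_m]`
at the two special points of `[F_m, G_m]`, the other `m - 1` factors add less than `2` each.
-/

open Function

namespace CircleDeg1Lift

variable (f : CircleDeg1Lift)

theorem map_sub_self_lt_map_sub_self_add_one (x y : ℝ) : f x - x < f y - y + 1 := by
  have hle : f x ≤ f y + ⌈x - y⌉ := by
    rw [← f.map_add_int]
    exact f.mono (by linarith [Int.le_ceil (x - y)])
  linarith [Int.ceil_lt_add_one (x - y)]

theorem exists_forall_map_sub_self_le (hf : Continuous f) : ∃ z, ∀ x, f x - x ≤ f z - z := by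
  obtain ⟨z, -, hz⟩ := isCompact_Icc.exists_isMaxOn (Set.nonempty_Icc.2 zero_le_one)
    (hf.sub continuous_id).continuousOn
  exact ⟨z, f.forall_map_sub_of_Icc (· ≤ f z - z) hz⟩

theorem exists_forall_le_map_sub_self (hf : Continuous f) : ∃ z, ∀ x, f z - z ≤ f x - x := by
  obtain ⟨z, -, hz⟩ := isCompact_Icc.exists_isMinOn (Set.nonempty_Icc.2 zero_le_one)
    (hf.sub continuous_id).continuousOn
  exact ⟨z, f.forall_map_sub_of_Icc (f z - z ≤ ·) hz⟩

end CircleDeg1Lift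

namespace IsCircleLift

variable {F G : ℝ → ℝ}

def toCircleDeg1Lift (hF : IsCircleLift F) : CircleDeg1Lift := ⟨⟨F, hF.1.monotone⟩, hF.2.2⟩

@[simp]
theorem coe_toCircleDeg1Lift (hF : IsCircleLift F) : ⇑hF.toCircleDeg1Lift = F := rfl

theorem continuous (hF : IsCircleLift F) : Continuous F :=
  (hF.1.orderIsoOfSurjective F hF.2.1.2).continuous

theorem comp (hF : IsCircleLift F) (hG : IsCircleLift G) : IsCircleLift (F ∘ G) :=
  ⟨hF.1.comp hG.1, hF.2.1.comp hG.2.1, fun x => by simp only [comp_apply, hG.2.2, hF.2.2]⟩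

theorem invFun (hF : IsCircleLift F) : IsCircleLift (Function.invFun F) := by
  obtain ⟨hmono, hbij, hadd⟩ := hF
  have hright : RightInverse (Function.invFun F) F := rightInverse_invFun hbij.2
  refine ⟨fun x y hxy => ?_, ⟨hright.injective, (leftInverse_invFun hbij.1).surjective⟩,
    fun x => hbij.1 ?_⟩
  · rwa [← hmono.lt_iff_lt, hright x, hright y]
  · rw [hright, hadd, hright]

theorem circleComm (hF : IsCircleLift F) (hG : IsCircleLift G) :
    IsCircleLift (circleComm F G) :=
  hF.comp (hG.comp (hF.invFun.comp hG.invFun))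

end IsCircleLift

section Commutator

variable {F G : ℝ → ℝ}

theorem circleComm_apply_apply (hF : Injective F) (hG : Injective G) (z : ℝ) :
    circleComm F G (G (F z)) = F (G z) := by
  simp only [circleComm, comp_apply, leftInverse_invFun hG (F z), leftInverse_invFun hF z]

theorem exists_circleComm_sub_self_lt_one (hF : IsCircleLift F) (hG : IsCircleLift G) :
    ∃ x, circleComm F G x - x < 1 := by
  obtain ⟨z, hz⟩ := hF.toCircleDeg1Lift.exists_forall_map_sub_self_le hF.continuous
  refine ⟨G (F z), ?_⟩
  have hFG : F (G z) - G z ≤ F z - z := by simpa using hz (G z)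
  have hGF : G z - z < G (F z) - F z + 1 := by
    simpa using hG.toCircleDeg1Lift.map_sub_self_lt_map_sub_self_add_one z (F z)
  rw [circleComm_apply_apply hF.2.1.1 hG.2.1.1]
  linarith

theorem exists_neg_one_lt_circleComm_sub_self (hF : IsCircleLift F) (hG : IsCircleLift G) :
    ∃ x, -1 < circleComm F G x - x := by
  obtain ⟨z, hz⟩ := hF.toCircleDeg1Lift.exists_forall_le_map_sub_self hF.continuous
  refine ⟨G (F z), ?_⟩
  have hFG : F z - z ≤ F (G z) - G z := by simpa using hz (G z)
  have hGF : G (F z) - F z < G z - z + 1 := by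
    simpa using hG.toCircleDeg1Lift.map_sub_self_lt_map_sub_self_add_one (F z) z
  rw [circleComm_apply_apply hF.2.1.1 hG.2.1.1]
  linarith

theorem abs_circleComm_sub_self_lt_two (hF : IsCircleLift F) (hG : IsCircleLift G) (x : ℝ) :
    |circleComm F G x - x| < 2 := by
  obtain ⟨x₁, hx₁⟩ := exists_circleComm_sub_self_lt_one hF hG
  obtain ⟨x₂, hx₂⟩ := exists_neg_one_lt_circleComm_sub_self hF hG
  have h₁ := (hF.circleComm hG).toCircleDeg1Lift.map_sub_self_lt_map_sub_self_add_one x x₁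
  have h₂ := (hF.circleComm hG).toCircleDeg1Lift.map_sub_self_lt_map_sub_self_add_one x₂ x
  simp only [IsCircleLift.coe_toCircleDeg1Lift] at h₁ h₂
  rw [abs_lt]
  constructor <;> linarith

end Commutator

theorem abs_foldr_comp_apply_sub_le (L : List (ℝ → ℝ)) (f : ℝ → ℝ) {c : ℝ}
    (hL : ∀ g ∈ L, ∀ x, |g x - x| ≤ c) (y : ℝ) :
    |L.foldr (· ∘ ·) f y - f y| ≤ L.length * c := by
  induction L with
  | nil => simp
  | cons g L ih =>
    have hg := hL g List.mem_cons_self (L.foldr (· ∘ ·) f y)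
    have hrest := ih fun h hh => hL h (List.mem_cons_of_mem g hh)
    simp only [List.foldr_cons, comp_apply, List.length_cons, Nat.cast_succ]
    calc |g (L.foldr (· ∘ ·) f y) - f y|
        ≤ |g (L.foldr (· ∘ ·) f y) - L.foldr (· ∘ ·) f y| + |L.foldr (· ∘ ·) f y - f y| :=
          abs_sub_le _ _ _
      _ ≤ (L.length + 1) * c := by linarith

/-- Wood's estimate: if an `m`-fold product of commutators of lifts of
orientation-preserving circle homeomorphisms is the translation by `a`,
then `|a| < 2 m - 1`. -/
theorem wood_commutator_translation_bound
    (m : ℕ) (hm : 1 ≤ m) (F G : Fin m → ℝ → ℝ)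
    (hF : ∀ i, IsCircleLift (F i)) (hG : ∀ i, IsCircleLift (G i)) (a : ℝ)
    (h : (List.ofFn fun i => circleComm (F i) (G i)).foldr (· ∘ ·) id
        = fun x => x + a) :
    |a| < 2 * (m : ℝ) - 1 := by
  obtain ⟨n, rfl⟩ := Nat.exists_eq_add_of_le' hm
  rw [List.ofFn_succ', List.concat_eq_append, List.foldr_concat] at h
  set L := List.ofFn fun i : Fin n => circleComm (F i.castSucc) (G i.castSucc)
  have hL : ∀ g ∈ L, ∀ x, |g x - x| ≤ 2 := by
    intro g hg x
    obtain ⟨i, rfl⟩ := List.mem_ofFn.1 hg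
    exact (abs_circleComm_sub_self_lt_two (hF _) (hG _) x).le
  have hrest (y : ℝ) := congrFun h y ▸ abs_foldr_comp_apply_sub_le L _ hL y
  obtain ⟨y₁, hy₁⟩ := exists_circleComm_sub_self_lt_one (hF (Fin.last n)) (hG (Fin.last n))
  obtain ⟨y₂, hy₂⟩ := exists_neg_one_lt_circleComm_sub_self (hF (Fin.last n)) (hG (Fin.last n))
  have h₁ := abs_le.1 (hrest y₁)
  have h₂ := abs_le.1 (hrest y₂)
  simp only [comp_apply, id_eq, List.length_ofFn, L] at h₁ h₂
  push_cast
  rw [abs_lt]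
  constructor <;> linarith
end

section
/- (Benzécri's turning-number estimate.) Let v : [0,1] → ℝ² be a continuous path with v(t) ≠ 0 for all t (for instance the velocity of a smooth immersion), and let A ∈ GL(2,ℝ) with det A > 0 (the linear part of an orientation-preserving affine transformation of the plane). Suppose θ, φ : [0,1] → ℝ are continuous functions such that v(t) = ‖v(t)‖·(cos θ(t), sin θ(t)) and A v(t) = ‖A v(t)‖·(cos φ(t), sin φ(t)) for all t ∈ [0,1]. Then |(θ(1) − θ(0)) − (φ(1) − φ(0))| < π; that is, the turning of a nonvanishing plane path and the turning of its image under an orientation-preserving affine transformation differ by less than π. -/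
/-- The Euclidean length of a vector in the plane. -/
noncomputable def planeNorm (p : ℝ × ℝ) : ℝ :=
  Real.sqrt (p.1 ^ 2 + p.2 ^ 2)

/-- The action of a `2 × 2` matrix on the plane. -/
def matApply (A : Matrix (Fin 2) (Fin 2) ℝ) (p : ℝ × ℝ) : ℝ × ℝ :=
  (A 0 0 * p.1 + A 0 1 * p.2, A 1 0 * p.1 + A 1 1 * p.2)

/-!
Write `ψ = φ - θ` for the angle from `v t` to `A (v t)`. For `A = [[a, b], [c, d]]` the identity
`(a + d) ⟪A v, v⟫ + (c - b) (v × A v) = det A ‖v‖² + ‖A v‖²` shows that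
`(a + d) cos ψ + (c - b) sin ψ > 0` at every time, i.e. `ψ t` stays in an open half-circle
`{cos (· - α) > 0}` that does not depend on `t`. A continuous function with values in such a
half-circle changes by less than `π`, since any interval of length `π` contains a zero of
`cos (· - α)`.
-/

open Real Set

lemma exists_cos_eq_zero_mem_Icc (x : ℝ) : ∃ y ∈ Icc x (x + π), cos y = 0 := by
  set k : ℤ := ⌈(x - π / 2) / π⌉
  have hk := Int.le_ceil ((x - π / 2) / π)
  have hk' : (k : ℝ) - 1 < (x - π / 2) / π := by
    linarith [Int.ceil_lt_add_one ((x - π / 2) / π)]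
  rw [div_le_iff₀ pi_pos] at hk
  rw [lt_div_iff₀ pi_pos] at hk'
  refine ⟨π / 2 + k * π, ⟨by linarith, by nlinarith [pi_pos]⟩, ?_⟩
  exact cos_eq_zero_iff.mpr ⟨k, by ring⟩

lemma abs_sub_lt_pi_of_cos_pos {ψ : ℝ → ℝ} {a b : ℝ} (hψ : ContinuousOn ψ (uIcc a b))
    (hpos : ∀ t ∈ uIcc a b, 0 < cos (ψ t)) : |ψ b - ψ a| < π := by
  by_contra! hge
  obtain ⟨y, hy, hcos⟩ := exists_cos_eq_zero_mem_Icc (min (ψ a) (ψ b))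
  have hy' : y ∈ uIcc (ψ a) (ψ b) :=
    ⟨hy.1, by linarith [hy.2, max_sub_min_eq_abs (ψ a) (ψ b)]⟩
  obtain ⟨t, ht, rfl⟩ := intermediate_value_uIcc hψ hy'
  exact (hpos t ht).ne' hcos

lemma exists_mul_cos_add_mul_sin_eq (p q : ℝ) :
    ∃ R α, 0 ≤ R ∧ ∀ x, p * cos x + q * sin x = R * cos (x - α) := by
  refine ⟨‖(⟨p, q⟩ : ℂ)‖, Complex.arg ⟨p, q⟩, norm_nonneg _, fun x => ?_⟩
  rw [cos_sub]
  linear_combination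
    -cos x * Complex.norm_mul_cos_arg ⟨p, q⟩ - sin x * Complex.norm_mul_sin_arg ⟨p, q⟩

lemma abs_sub_lt_pi_of_mul_cos_add_mul_sin_pos {ψ : ℝ → ℝ} {a b p q : ℝ}
    (hψ : ContinuousOn ψ (uIcc a b))
    (hpos : ∀ t ∈ uIcc a b, 0 < p * cos (ψ t) + q * sin (ψ t)) :
    |ψ b - ψ a| < π := by
  obtain ⟨R, α, hR, hpq⟩ := exists_mul_cos_add_mul_sin_eq p q
  have := abs_sub_lt_pi_of_cos_pos (hψ.sub continuousOn_const)
    fun t ht => pos_of_mul_pos_right ((hpq _).symm ▸ hpos t ht) hR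
  simpa using this

lemma planeNorm_sq (p : ℝ × ℝ) : planeNorm p ^ 2 = p.1 ^ 2 + p.2 ^ 2 :=
  sq_sqrt (by positivity)

lemma planeNorm_pos {p : ℝ × ℝ} (hp : p ≠ 0) : 0 < planeNorm p := by
  refine sqrt_pos.mpr (lt_of_le_of_ne (by positivity) fun h => hp ?_)
  obtain ⟨h1, h2⟩ := (add_eq_zero_iff_of_nonneg (sq_nonneg _) (sq_nonneg _)).mp h.symm
  exact Prod.ext (pow_eq_zero_iff two_ne_zero |>.mp h1) (pow_eq_zero_iff two_ne_zero |>.mp h2)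

lemma trace_mul_cos_add_mul_sin_pos {A : Matrix (Fin 2) (Fin 2) ℝ} (hA : 0 < A.det)
    {v : ℝ × ℝ} (hv : v ≠ 0) {θ φ : ℝ} (hθ : v = planeNorm v • (cos θ, sin θ))
    (hφ : matApply A v = planeNorm (matApply A v) • (cos φ, sin φ)) :
    0 < (A 0 0 + A 1 1) * cos (φ - θ) + (A 1 0 - A 0 1) * sin (φ - θ) := by
  set n := planeNorm v
  set m := planeNorm (matApply A v)
  have hx := congrArg Prod.fst hθ
  have hy := congrArg Prod.snd hθ
  have hX := congrArg Prod.fst hφ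
  have hY := congrArg Prod.snd hφ
  simp only [matApply, Prod.smul_mk, smul_eq_mul] at hx hy hX hY
  have hnsq : n ^ 2 = v.1 ^ 2 + v.2 ^ 2 := planeNorm_sq v
  have hmsq : m ^ 2 = (matApply A v).1 ^ 2 + (matApply A v).2 ^ 2 := planeNorm_sq _
  simp only [matApply] at hmsq
  -- `n m cos (φ - θ)` and `n m sin (φ - θ)` are the inner and cross products of `v` and `A v`.
  have key : n * m * ((A 0 0 + A 1 1) * cos (φ - θ) + (A 1 0 - A 0 1) * sin (φ - θ))
      = A.det * n ^ 2 + m ^ 2 := by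
    rw [Matrix.det_fin_two, cos_sub, sin_sub]
    linear_combination (A 0 0 + A 1 1) * (-v.1 * hX - m * cos φ * hx - v.2 * hY - m * sin φ * hy)
      + (A 1 0 - A 0 1) * (-v.1 * hY - m * sin φ * hx + v.2 * hX + m * cos φ * hy)
      - (A 0 0 * A 1 1 - A 0 1 * A 1 0) * hnsq - hmsq
  have hn := planeNorm_pos hv
  refine pos_of_mul_pos_right (a := n * m) ?_ (mul_nonneg hn.le (sqrt_nonneg _))
  rw [key]
  exact add_pos_of_pos_of_nonneg (mul_pos hA (pow_pos hn 2)) (sq_nonneg m)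

theorem benzecri_turning_estimate_general
    (v : ℝ → ℝ × ℝ)
    (hvne : ∀ t ∈ Set.Icc (0 : ℝ) 1, v t ≠ 0)
    (A : Matrix (Fin 2) (Fin 2) ℝ) (hA : 0 < A.det)
    (θ φ : ℝ → ℝ)
    (hθc : ContinuousOn θ (Set.Icc 0 1)) (hφc : ContinuousOn φ (Set.Icc 0 1))
    (hθ : ∀ t ∈ Set.Icc (0 : ℝ) 1,
      v t = planeNorm (v t) • (Real.cos (θ t), Real.sin (θ t)))
    (hφ : ∀ t ∈ Set.Icc (0 : ℝ) 1,
      matApply A (v t)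
        = planeNorm (matApply A (v t)) • (Real.cos (φ t), Real.sin (φ t))) :
    |(θ 1 - θ 0) - (φ 1 - φ 0)| < Real.pi := by
  rw [← uIcc_of_le zero_le_one] at hθc hφc hvne hθ hφ
  have h := abs_sub_lt_pi_of_mul_cos_add_mul_sin_pos (hφc.sub hθc)
    fun t ht => trace_mul_cos_add_mul_sin_pos hA (hvne t ht) (hθ t ht) (hφ t ht)
  rw [abs_sub_comm] at h
  convert h using 2
  simp only [Pi.sub_apply]
  ring

/-- Benzécri's turning-number estimate: the turning of a continuous nonvanishing
plane path and the turning of its image under an orientation-preserving linear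
transformation differ by less than `π`. -/
theorem benzecri_turning_estimate
    (v : ℝ → ℝ × ℝ) (hv : ContinuousOn v (Set.Icc 0 1))
    (hvne : ∀ t ∈ Set.Icc (0 : ℝ) 1, v t ≠ 0)
    (A : Matrix (Fin 2) (Fin 2) ℝ) (hA : 0 < A.det)
    (θ φ : ℝ → ℝ)
    (hθc : ContinuousOn θ (Set.Icc 0 1)) (hφc : ContinuousOn φ (Set.Icc 0 1))
    (hθ : ∀ t ∈ Set.Icc (0 : ℝ) 1,
      v t = planeNorm (v t) • (Real.cos (θ t), Real.sin (θ t)))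
    (hφ : ∀ t ∈ Set.Icc (0 : ℝ) 1,
      matApply A (v t)
        = planeNorm (matApply A (v t)) • (Real.cos (φ t), Real.sin (φ t))) :
    |(θ 1 - θ 0) - (φ 1 - φ 0)| < Real.pi :=
  benzecri_turning_estimate_general v hvne A hA θ φ hθc hφc hθ hφ
end
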